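/- arXiv:2305.19940 — 2 statements merged into one kernel-verified Lean document; each statement's English description precedes it below -/
import Mathlib

section
/- Changing the roles of the activation dipole and the measurement sensor does not change the MRXI measurement: let Ω ⊂ ℝ^d be a bounded measurable set, let s, a ∈ ℝ^d lie outside the closure of Ω, let σ, α ∈ ℝ^d, and let c : Ω → ℝ be integrable. Then ∫_Ω κ_{σ,a,α}(s,x) c(x) dx = ∫_Ω κ_{α,s,σ}(a,x) c(x) dx, i.e. y_{s,σ,a,α} = y_{a,α,s,σ}. -/
open Matrix MeasureTheory

/-- Euclidean norm of a vector in `ℝ^d`. -/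
noncomputable def enorm' {d : ℕ} (v : Fin d → ℝ) : ℝ := Real.sqrt (∑ i, v i ^ 2)

/-- The dipole matrix `D(v) = 3 v vᵀ / |v|⁵ − I / |v|³`. -/
noncomputable def Dmat {d : ℕ} (v : Fin d → ℝ) : Matrix (Fin d) (Fin d) ℝ :=
  (3 / enorm' v ^ 5) • Matrix.vecMulVec v v
    - (enorm' v ^ 3)⁻¹ • (1 : Matrix (Fin d) (Fin d) ℝ)

/-- The MRXI kernel `κ_{σ,a,α}(w,x) = σᵀ D(w−x) D(x−a) α`. -/
noncomputable def kappa {d : ℕ} (σ a α : Fin d → ℝ) (w x : Fin d → ℝ) : ℝ :=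
  σ ⬝ᵥ (Dmat (w - x)).mulVec ((Dmat (x - a)).mulVec α)

lemma enorm'_neg {d : ℕ} (v : Fin d → ℝ) : enorm' (-v) = enorm' v := by
  simp [enorm']

lemma Dmat_neg {d : ℕ} (v : Fin d → ℝ) : Dmat (-v) = Dmat v := by
  unfold Dmat
  rw [enorm'_neg]
  congr 1
  ext i j
  simp [Matrix.vecMulVec_apply]

lemma Dmat_transpose {d : ℕ} (v : Fin d → ℝ) : (Dmat v)ᵀ = Dmat v := by
  ext i j
  simp [Dmat, Matrix.transpose_apply, Matrix.vecMulVec_apply, Matrix.one_apply]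
  ring_nf
  rcases eq_or_ne i j with h | h <;> simp [h, eq_comm, mul_comm]

lemma kappa_symm {d : ℕ} (σ a α s x : Fin d → ℝ) :
    kappa σ a α s x = kappa α s σ a x := by
  unfold kappa
  rw [Matrix.mulVec_mulVec, Matrix.mulVec_mulVec]
  rw [Matrix.dotProduct_mulVec,
    ← Matrix.transpose_transpose (Dmat (s - x) * Dmat (x - a)),
    Matrix.vecMul_transpose, dotProduct_comm,
    Matrix.transpose_mul, Dmat_transpose, Dmat_transpose]
  have h1 : x - a = -(a - x) := by ring
  have h2 : s - x = -(x - s) := by ring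
  rw [h1, h2, Dmat_neg, Dmat_neg]

/-- Exchanging the roles of the activation dipole `(a, α)` and the measurement
sensor `(s, σ)` does not change the MRXI measurement `y_{s,σ,a,α}`. -/
theorem measurement_symmetric {d : ℕ} (Ω : Set (Fin d → ℝ))
    (hΩb : Bornology.IsBounded Ω) (hΩm : MeasurableSet Ω)
    (s a : Fin d → ℝ) (hs : s ∉ closure Ω) (ha : a ∉ closure Ω)
    (σ α : Fin d → ℝ) (c : (Fin d → ℝ) → ℝ) (hc : IntegrableOn c Ω) :
    ∫ x in Ω, kappa σ a α s x * c x = ∫ x in Ω, kappa α s σ a x * c x := by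
  simp only [kappa_symm σ a α s]
end

section
/- The MRXI forward operator is compact: let Ω, D ⊂ ℝ^d be bounded measurable sets whose closures are disjoint, let a ∈ ℝ^d lie outside the closure of Ω, and let σ, α ∈ ℝ^d. Then the linear map 𝒦 : L²(Ω) → L²(D) defined by (𝒦c)(s) := ∫_Ω κ_{σ,a,α}(s,x) c(x) dx is a well-defined bounded linear operator and is a compact operator. -/
/-!
The kernel `κ_{σ,a,α}` is continuous on the compact set `closure D ×ˢ closure Ω`, which avoids
both of its singular sets `w = x` and `x = a`. By uniform continuity on this set, `s ↦ κ(s, ·)` is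
a continuous map from `closure D` to `L²(Ω)`, hence an element `g` of `L²(D; L²(Ω))`, and
`𝒦c = ⟪c, g(·)⟫`. The operator `c ↦ ⟪c, g(·)⟫` depends continuously on `g` and has rank one when
`g` is an indicator function times a vector, so density of simple functions in `L²` and
closedness of the set of compact operators make it compact for every `g`.
-/

open Matrix MeasureTheory

section InnerLp

variable {Y H : Type*} [MeasurableSpace Y] [NormedAddCommGroup H] [InnerProductSpace ℝ H]

variable (μ : Measure Y) in
noncomputable def innerLp : Lp H 2 μ →L[ℝ] H →L[ℝ] Lp ℝ 2 μ :=
  (ContinuousLinearMap.compLpL₂ 2 μ (innerSL ℝ)).flip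

variable {μ : Measure Y}

lemma innerLp_apply_ae_eq (g : Lp H 2 μ) (c : H) :
    innerLp μ g c =ᵐ[μ] fun y => inner ℝ c (g y) :=
  (innerSL ℝ c).coeFn_compLp' g

lemma innerLp_indicatorConstLp {s : Set Y} (hs : MeasurableSet s) (hμs : μ s ≠ ⊤) (v : H) :
    innerLp μ (indicatorConstLp 2 hs hμs v) =
      (ContinuousLinearMap.toSpanSingleton ℝ (indicatorConstLp 2 hs hμs (1 : ℝ))).comp
        (innerSL ℝ v) := by
  ext1 c
  refine Lp.ext ?_
  filter_upwards [innerLp_apply_ae_eq (indicatorConstLp 2 hs hμs v) c,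
    indicatorConstLp_coeFn (p := 2) (hs := hs) (hμs := hμs) (c := v),
    Lp.coeFn_smul (inner ℝ v c) (indicatorConstLp 2 hs hμs (1 : ℝ)),
    indicatorConstLp_coeFn (p := 2) (hs := hs) (hμs := hμs) (c := (1 : ℝ))] with y h₁ h₂ h₃ h₄
  simp only [ContinuousLinearMap.comp_apply, ContinuousLinearMap.toSpanSingleton_apply,
    innerSL_apply_apply, h₁, h₂, h₃, h₄, Pi.smul_apply]
  by_cases hy : y ∈ s <;> simp [hy, real_inner_comm]

theorem isCompactOperator_innerLp (g : Lp H 2 μ) : IsCompactOperator (innerLp μ g) := by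
  induction g using Lp.induction (p := 2) ENNReal.ofNat_ne_top with
  | indicatorConst v hs hμs =>
    rw [Lp.simpleFunc.coe_indicatorConst, innerLp_indicatorConstLp]
    exact (isCompactOperator_of_locallyCompactSpace_dom (innerSL ℝ v)).clm_comp
      (ContinuousLinearMap.toSpanSingleton ℝ (indicatorConstLp 2 hs hμs.ne (1 : ℝ)))
  | add _ _ _ hf hg =>
    rw [map_add]
    exact hf.add hg
  | isClosed =>
    exact isClosed_setOfPred_isCompactOperator.preimage (innerLp μ).continuous

end InnerLp

section Slices

variable {X Y E : Type*} [TopologicalSpace X] [TopologicalSpace Y] [MeasurableSpace Y]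
  [OpensMeasurableSpace Y] [NormedAddCommGroup E] [SecondCountableTopologyEither Y E]
  {μ : Measure Y} {p : ENNReal}

theorem ContinuousOn.memLp_restrict_of_isCompact {f : Y → E} {k Ω : Set Y} (hk : IsCompact k)
    (hΩk : Ω ⊆ k) (hΩ : MeasurableSet Ω) [IsFiniteMeasure (μ.restrict Ω)]
    (hf : ContinuousOn f k) : MemLp f p (μ.restrict Ω) := by
  obtain ⟨C, hC⟩ := hk.exists_bound_of_continuousOn hf
  refine .of_bound ((hf.mono hΩk).aestronglyMeasurable hΩ) C ?_
  filter_upwards [ae_restrict_mem hΩ] with y hy using hC y (hΩk hy)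

theorem IsCompact.exists_continuousOn_slice_toLp [Fact (1 ≤ p)] {f : X → Y → E} {s : Set X}
    {k Ω : Set Y} (hk : IsCompact k) (hΩk : Ω ⊆ k) (hΩ : MeasurableSet Ω)
    [IsFiniteMeasure (μ.restrict Ω)] (hf : ContinuousOn (Function.uncurry f) (s ×ˢ k)) :
    ∃ g : X → Lp E p (μ.restrict Ω), ContinuousOn g s ∧ ∀ x ∈ s, g x =ᵐ[μ.restrict Ω] f x := by
  have hmem : ∀ x ∈ s, MemLp (f x) p (μ.restrict Ω) := fun x hx =>
    ContinuousOn.memLp_restrict_of_isCompact hk hΩk hΩ <|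
      hf.comp (Continuous.prodMk_right x).continuousOn fun _ hy => ⟨hx, hy⟩
  classical
  let g : X → Lp E p (μ.restrict Ω) := fun x =>
    if h : MemLp (f x) p (μ.restrict Ω) then h.toLp else 0
  have hg : ∀ x ∈ s, g x =ᵐ[μ.restrict Ω] f x := fun x hx => by
    simp only [g, dif_pos (hmem x hx)]
    exact MemLp.coeFn_toLp _
  refine ⟨g, fun x₀ hx₀ => Metric.tendsto_nhds.2 fun ε hε => ?_, hg⟩
  set C : ℝ := measureUnivNNReal (μ.restrict Ω) ^ p.toReal⁻¹
  obtain ⟨δ, hδ, hCδ⟩ := exists_pos_mul_lt hε C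
  obtain ⟨v, hv, hfv⟩ := hk.mem_uniformity_of_prod hf hx₀ (Metric.dist_mem_uniformity hδ)
  filter_upwards [hv, self_mem_nhdsWithin] with x hxv hx
  calc dist (g x) (g x₀) ≤ C * δ := by
        rw [dist_eq_norm]
        refine Lp.norm_le_of_ae_bound hδ.le ?_
        filter_upwards [Lp.coeFn_sub (g x) (g x₀), hg x hx, hg x₀ hx₀, ae_restrict_mem hΩ]
          with y h₁ h₂ h₃ hy
        rw [h₁, Pi.sub_apply, h₂, h₃, ← dist_eq_norm]
        exact (hfv x hxv y (hΩk hy)).le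
    _ < ε := hCδ

end Slices

lemma enorm'_pos {d : ℕ} {v : Fin d → ℝ} (hv : v ≠ 0) : 0 < enorm' v := by
  obtain ⟨i, hi⟩ := Function.ne_iff.1 hv
  exact Real.sqrt_pos.2 <|
    Finset.sum_pos' (fun j _ => sq_nonneg (v j)) ⟨i, Finset.mem_univ i, sq_pos_of_ne_zero hi⟩

lemma continuous_enorm' {d : ℕ} : Continuous (enorm' (d := d)) := by
  unfold enorm'
  fun_prop

lemma continuousAt_Dmat {d : ℕ} {v : Fin d → ℝ} (hv : v ≠ 0) : ContinuousAt Dmat v := by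
  have := continuous_enorm' (d := d)
  have := (enorm'_pos hv).ne'
  unfold Dmat
  fun_prop (disch := positivity)

lemma continuousOn_kappa {d : ℕ} (σ a α : Fin d → ℝ) :
    ContinuousOn (Function.uncurry (kappa σ a α)) {p | p.1 ≠ p.2 ∧ p.2 ≠ a} := by
  refine continuousOn_of_forall_continuousAt fun p hp => ?_
  have h₁ : ContinuousAt (fun q : (Fin d → ℝ) × (Fin d → ℝ) => Dmat (q.1 - q.2)) p :=
    ContinuousAt.comp (f := fun q : (Fin d → ℝ) × (Fin d → ℝ) => q.1 - q.2)
      (continuousAt_Dmat (sub_ne_zero.2 hp.1)) (by fun_prop)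
  have h₂ : ContinuousAt (fun q : (Fin d → ℝ) × (Fin d → ℝ) => Dmat (q.2 - a)) p :=
    ContinuousAt.comp (f := fun q : (Fin d → ℝ) × (Fin d → ℝ) => q.2 - a)
      (continuousAt_Dmat (sub_ne_zero.2 hp.2)) (by fun_prop)
  unfold Function.uncurry kappa
  fun_prop

/-- The MRXI forward operator `𝒦 : L²(Ω) → L²(D)`, `(𝒦c)(s) = ∫_Ω κ_{σ,a,α}(s,x) c(x) dx`,
is a well-defined bounded linear operator and is compact. -/
theorem forward_operator_compact {d : ℕ} (Ω D : Set (Fin d → ℝ))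
    (hΩb : Bornology.IsBounded Ω) (hΩm : MeasurableSet Ω)
    (hDb : Bornology.IsBounded D) (hDm : MeasurableSet D)
    (hdisj : Disjoint (closure Ω) (closure D))
    (a : Fin d → ℝ) (ha : a ∉ closure Ω) (σ α : Fin d → ℝ) :
    ∃ T : Lp ℝ 2 (volume.restrict Ω) →L[ℝ] Lp ℝ 2 (volume.restrict D),
      (∀ c : Lp ℝ 2 (volume.restrict Ω),
        (T c : (Fin d → ℝ) → ℝ) =ᵐ[volume.restrict D]
          fun s => ∫ x in Ω, kappa σ a α s x * (c : (Fin d → ℝ) → ℝ) x) ∧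
      IsCompactOperator T := by
  have : IsFiniteMeasure (volume.restrict Ω) := isFiniteMeasure_restrict.2 hΩb.measure_lt_top.ne
  have : IsFiniteMeasure (volume.restrict D) := isFiniteMeasure_restrict.2 hDb.measure_lt_top.ne
  have hκ : ContinuousOn (Function.uncurry (kappa σ a α)) (closure D ×ˢ closure Ω) :=
    (continuousOn_kappa σ a α).mono fun p ⟨hs, hx⟩ =>
      ⟨fun h => hdisj.ne_of_mem hx hs h.symm, fun h => ha (h ▸ hx)⟩
  obtain ⟨g, hg, hgκ⟩ := hΩb.isCompact_closure.exists_continuousOn_slice_toLp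
    (μ := volume) (p := 2) subset_closure hΩm hκ
  have hgL2 : MemLp g 2 (volume.restrict D) :=
    hg.memLp_restrict_of_isCompact hDb.isCompact_closure subset_closure hDm
  refine ⟨innerLp _ (hgL2.toLp g), fun c => ?_, isCompactOperator_innerLp _⟩
  filter_upwards [innerLp_apply_ae_eq (hgL2.toLp g) c, hgL2.coeFn_toLp, ae_restrict_mem hDm]
    with s h₁ h₂ hs
  rw [h₁, h₂, L2.inner_def]
  refine integral_congr_ae ?_
  filter_upwards [hgκ s (subset_closure hs)] with x hx
  simp [hx]
end
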